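/- Let F be a tileable figure with equilibrium function eq and base vertex w₀, and let h_min and h_max denote the minimal and maximal elements of the finite distributive lattice (H_F,≤). For every forced component U of F with U≠U_∞ and every vertex v of U, one has h_min(v)≠h_max(v). -/

import Mathlib

/-!
Call an arc tight for a height function `h` when `h` increases by `t` along it. Lowering
a height function by `4` on a set of vertices closed under outgoing tight arcs yields a
height function again. By minimality of `h_min`, every vertex therefore reaches `w₀` along
`h_min`-tight arcs; and if `h_min(v) = h_max(v)`, then `h_min + 4` off the vertices that `w₀`
reaches shows that `w₀` reaches `v` as well. A tight arc lying on a closed tight walk lies on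
an elementary tight cycle, whose `t`-sum telescopes to `0`: it is critical. Hence `v` and
`w₀` lie in the same forced component.
-/


open Classical

noncomputable section

abbrev Vtx : Type := ℤ × ℤ
abbrev GArc : Type := Vtx × Vtx

/-- `a` is an arc of the grid graph `Λ⁺`: its endpoints differ by a unit vector. -/
def IsArc (a : GArc) : Prop :=
  (a.2.1 - a.1.1).natAbs + (a.2.2 - a.1.2).natAbs = 1

/-- reversal of an arc -/
def arev (a : GArc) : GArc := (a.2, a.1)

/-- `+1` if the cell with lower-left corner `c` is black, `-1` if it is white
(checkerboard coloring). -/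
def colorSign (c : Vtx) : ℤ := if (c.1 + c.2) % 2 = 0 then 1 else -1

/-- spin of an arc: `+1` if a traveler along the arc has a white cell on its left,
`-1` otherwise. -/
def sp (a : GArc) : ℤ :=
  colorSign a.1 * ((a.2.2 - a.1.2) ^ 2 - (a.2.1 - a.1.1) ^ 2)

/-- the arcs of a path/cycle given by its list of vertices -/
def arcsOf (C : List Vtx) : List GArc := C.zip C.tail

/-- sum of a function `g` on arcs over all the arcs of `C` (with multiplicity) -/
def sumOn (g : GArc → ℤ) (C : List Vtx) : ℤ := ((arcsOf C).map g).sum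

/-- a (closed) cycle of the grid -/
def IsCycle (C : List Vtx) : Prop :=
  2 ≤ C.length ∧ C.head? = C.getLast? ∧ ∀ a ∈ arcsOf C, IsArc a

/-- an elementary cycle: no repeated vertex except the endpoints -/
def IsElemCycle (C : List Vtx) : Prop := IsCycle C ∧ C.dropLast.Nodup

/-- contribution of an arc to the winding number of a cycle around the center of
cell `c` (crossings of the horizontal ray going East from the center of `c`). -/
def windTerm (c : Vtx) (a : GArc) : ℤ :=
  if a.1.1 = a.2.1 ∧ c.1 < a.1.1 ∧ min a.1.2 a.2.2 = c.2 then a.2.2 - a.1.2 else 0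

/-- winding number of the cycle `C` around the center of the cell `c` -/
def wind (C : List Vtx) (c : Vtx) : ℤ := sumOn (windTerm c) C

/-- a cycle is clockwise when its winding number around any cell is nonpositive
(`-1` on enclosed cells, `0` elsewhere) -/
def IsClockwise (C : List Vtx) : Prop := ∀ c : Vtx, wind C c ≤ 0

/-- a cell is enclosed by `C` when the winding number of `C` around it is nonzero -/
def Encloses (C : List Vtx) (c : Vtx) : Prop := wind C c ≠ 0

/-- number of black cells minus number of white cells enclosed by a clockwise cycle -/
def Dis (C : List Vtx) : ℤ := -∑ᶠ c : Vtx, wind C c * colorSign c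

/-- 4-adjacency of cells (shared edge) -/
def adj4 (c c' : Vtx) : Prop := (c'.1 - c.1).natAbs + (c'.2 - c.2).natAbs = 1

/-- 8-adjacency of cells (shared vertex at least) -/
def adj8 (c c' : Vtx) : Prop := c ≠ c' ∧ (c'.1 - c.1).natAbs ≤ 1 ∧ (c'.2 - c.2).natAbs ≤ 1

/-- a figure: a nonempty, finite, 4-connected set of cells such that no vertex has
all its incident edges on the boundary (no diagonal pinch, so no vertex
duplication is needed). -/
def IsFigure (F : Finset Vtx) : Prop :=
  F.Nonempty ∧
  (∀ c ∈ F, ∀ c' ∈ F, Relation.ReflTransGen (fun x y => x ∈ F ∧ y ∈ F ∧ adj4 x y) c c') ∧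
  (∀ x y : ℤ,
    ¬((x - 1, y - 1) ∈ F ∧ (x, y) ∈ F ∧ (x, y - 1) ∉ F ∧ (x - 1, y) ∉ F) ∧
    ¬((x, y - 1) ∈ F ∧ (x - 1, y) ∈ F ∧ (x - 1, y - 1) ∉ F ∧ (x, y) ∉ F))

/-- one of the two cells adjacent to the edge `[a]` -/
def cellA (a : GArc) : Vtx :=
  if a.1.2 = a.2.2 then (min a.1.1 a.2.1, a.1.2) else (a.1.1, min a.1.2 a.2.2)

/-- the other cell adjacent to the edge `[a]` -/
def cellB (a : GArc) : Vtx :=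
  if a.1.2 = a.2.2 then (min a.1.1 a.2.1, a.1.2 - 1) else (a.1.1 - 1, min a.1.2 a.2.2)

/-- arcs of the graph `G_F`: the edge `[a]` is a side of a cell of `F` -/
def ArcF (F : Finset Vtx) (a : GArc) : Prop := IsArc a ∧ (cellA a ∈ F ∨ cellB a ∈ F)

/-- boundary arcs of `F`: exactly one of the two adjacent cells is in `F` -/
def BoundaryArcF (F : Finset Vtx) (a : GArc) : Prop :=
  IsArc a ∧ ¬(cellA a ∈ F ↔ cellB a ∈ F)

/-- interior arcs of `F`: both adjacent cells are in `F` -/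
def InteriorArcF (F : Finset Vtx) (a : GArc) : Prop :=
  IsArc a ∧ cellA a ∈ F ∧ cellB a ∈ F

/-- `v` is a corner of the cell with lower-left corner `c` -/
def isCorner (v c : Vtx) : Prop :=
  (v.1 = c.1 ∨ v.1 = c.1 + 1) ∧ (v.2 = c.2 ∨ v.2 = c.2 + 1)

/-- vertices of `G_F`: the corners of the cells of `F` -/
def VF (F : Finset Vtx) : Set Vtx := {v | ∃ c ∈ F, isCorner v c}

/-- a cycle of the graph `G_F` -/
def IsCycleF (F : Finset Vtx) (C : List Vtx) : Prop :=
  2 ≤ C.length ∧ C.head? = C.getLast? ∧ ∀ a ∈ arcsOf C, ArcF F a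

/-- an elementary cycle of the graph `G_F` -/
def IsElemCycleF (F : Finset Vtx) (C : List Vtx) : Prop :=
  IsCycleF F C ∧ C.dropLast.Nodup

/-- number of black cells of `F` minus number of white cells of `F` enclosed by
the clockwise cycle `C` -/
def DisF (F : Finset Vtx) (C : List Vtx) : ℤ := -∑ c ∈ F, wind C c * colorSign c

/-- `ef` is skew-symmetric on the arcs of `G_F` -/
def IsSkewOnF (F : Finset Vtx) (ef : GArc → ℤ) : Prop :=
  ∀ a, ArcF F a → ef (arev a) = -ef a

/-- an equilibrium function of the figure `F` -/
def IsEquilibrium (F : Finset Vtx) (ef : GArc → ℤ) : Prop :=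
  IsSkewOnF F ef ∧
  ∀ C, IsElemCycleF F C → IsClockwise C → sumOn sp C + sumOn ef C = 4 * DisF F C

/-- the four sides of the cell `c`, as canonically oriented arcs -/
def sides (c : Vtx) : List GArc :=
  [((c.1, c.2), (c.1 + 1, c.2)), ((c.1, c.2 + 1), (c.1 + 1, c.2 + 1)),
   ((c.1, c.2), (c.1, c.2 + 1)), ((c.1 + 1, c.2), (c.1 + 1, c.2 + 1))]

/-- a domino tiling of `F`, encoded by the symmetric set `D` of the arcs whose
underlying edges are the central axes of its dominoes: every central axis has
both of its adjacent cells in `F` (dominoes are included in `F`), and every cell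
of `F` is covered by exactly one domino (exactly one of its sides is a central
axis): no overlap and no gap. -/
def IsTiling (F : Finset Vtx) (D : Set GArc) : Prop :=
  (∀ a ∈ D, arev a ∈ D) ∧
  (∀ a ∈ D, IsArc a ∧ cellA a ∈ F ∧ cellB a ∈ F) ∧
  (∀ c ∈ F, ∃! a, a ∈ sides c ∧ a ∈ D)

/-- characteristic function of a tiling: `1` on central axes, `0` elsewhere -/
def chi (D : Set GArc) (a : GArc) : ℤ := if a ∈ D then 1 else 0

/-- the height difference function of a tiling -/
def gT (ef : GArc → ℤ) (D : Set GArc) (a : GArc) : ℤ :=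
  ef a - sp a + 2 * sp a * (1 - 2 * chi D a)

/-- the function `t`: `eq(a)-sp(a)+2` on interior arcs, `eq(a)+sp(a)` on boundary arcs -/
def tArc (F : Finset Vtx) (ef : GArc → ℤ) (a : GArc) : ℤ :=
  if cellA a ∈ F ∧ cellB a ∈ F then ef a - sp a + 2 else ef a + sp a

/-- the function `b`: `eq(a)-sp(a)-2` on interior arcs, `eq(a)+sp(a)` on boundary arcs -/
def bArc (F : Finset Vtx) (ef : GArc → ℤ) (a : GArc) : ℤ :=
  if cellA a ∈ F ∧ cellB a ∈ F then ef a - sp a - 2 else ef a + sp a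

/-- the 8-connected component of the cell `c` in the complement of `F` -/
def comp8 (F : Finset Vtx) (c : Vtx) : Set Vtx :=
  {c' | Relation.ReflTransGen (fun x y => x ∉ F ∧ y ∉ F ∧ adj8 x y) c c'}

/-- `c` belongs to a hole of `F` (a finite 8-connected component of the complement) -/
def IsHoleCell (F : Finset Vtx) (c : Vtx) : Prop := c ∉ F ∧ (comp8 F c).Finite

/-- `c` belongs to `H_∞`, the infinite 8-connected component of the complement -/
def IsHinfCell (F : Finset Vtx) (c : Vtx) : Prop := c ∉ F ∧ ¬(comp8 F c).Finite

/-- `w` is a vertex of `V_F` on the boundary of `H_∞` -/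
def OnOuterBoundary (F : Finset Vtx) (w : Vtx) : Prop :=
  w ∈ VF F ∧ ∃ c, IsHinfCell F c ∧ isCorner w c

/-- vertices on the boundary of `F` -/
def Vb (F : Finset Vtx) : Set Vtx :=
  {v | (∃ c ∈ F, isCorner v c) ∧ ∃ c, c ∉ F ∧ isCorner v c}

/-- `h` belongs to the class `H_F` of height functions -/
def InHF (F : Finset Vtx) (ef : GArc → ℤ) (w0 : Vtx) (h : Vtx → ℤ) : Prop :=
  h w0 = 0 ∧ ∀ a, ArcF F a →
    (h a.2 - h a.1 = bArc F ef a ∨ h a.2 - h a.1 = tArc F ef a)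

/-- `h` is the height function induced by the tiling `D` (based at `w0`) -/
def IsHeightOf (F : Finset Vtx) (ef : GArc → ℤ) (D : Set GArc) (w0 : Vtx)
    (h : Vtx → ℤ) : Prop :=
  h w0 = 0 ∧ ∀ a, ArcF F a → h a.2 - h a.1 = gT ef D a

/-- a critical cycle: an elementary cycle of `G_F` with `t(C) = 0` -/
def CriticalCycle (F : Finset Vtx) (ef : GArc → ℤ) (C : List Vtx) : Prop :=
  IsElemCycleF F C ∧ sumOn (tArc F ef) C = 0

/-- a strongly critical cycle: critical, and `sp(a) = 1` on all its interior arcs -/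
def StronglyCriticalCycle (F : Finset Vtx) (ef : GArc → ℤ) (C : List Vtx) : Prop :=
  CriticalCycle F ef C ∧ ∀ a ∈ arcsOf C, InteriorArcF F a → sp a = 1

/-- two vertices are critically equivalent when some critical cycle passes
through both -/
def critRel (F : Finset Vtx) (ef : GArc → ℤ) (v v' : Vtx) : Prop :=
  ∃ C, CriticalCycle F ef C ∧ v ∈ C ∧ v' ∈ C

/-- the forced component of the vertex `v` (class of the equivalence relation
generated by critical equivalence) -/
def fcomp (F : Finset Vtx) (ef : GArc → ℤ) (v : Vtx) : Set Vtx :=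
  {v' | v' ∈ VF F ∧ Relation.EqvGen (critRel F ef) v v'}

/-- `S` is a forced component of `F` -/
def IsForcedComponent (F : Finset Vtx) (ef : GArc → ℤ) (S : Set Vtx) : Prop :=
  ∃ v ∈ VF F, S = fcomp F ef v

/-- `a` is an arc of the graph `G_T` of the tiling `D` -/
def GTArc (F : Finset Vtx) (ef : GArc → ℤ) (D : Set GArc) (a : GArc) : Prop :=
  ArcF F a ∧ gT ef D a = tArc F ef a

/-- there is a directed path in `G_T` from `u` to `v` -/
def GTReach (F : Finset Vtx) (ef : GArc → ℤ) (D : Set GArc) (u v : Vtx) : Prop :=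
  Relation.ReflTransGen (fun x y => GTArc F ef D (x, y)) u v

/-- the result of an upward flip on the component `S`: add `4` on `S` -/
def flipUpAt (S : Set Vtx) (h : Vtx → ℤ) : Vtx → ℤ :=
  fun v => h v + S.indicator (fun _ => (4 : ℤ)) v

/-- the result of a downward flip on the component `S`: subtract `4` on `S` -/
def flipDownAt (S : Set Vtx) (h : Vtx → ℤ) : Vtx → ℤ :=
  fun v => h v - S.indicator (fun _ => (4 : ℤ)) v

/-- `|h(v_S) - h'(v_S)|` for a representative `v_S` of `S` -/
def compDiff (h h' : Vtx → ℤ) (S : Set Vtx) : ℤ :=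
  if hS : S.Nonempty then |h hS.some - h' hS.some| else 0

/-- the distance `Δ(h,h') = Σ_U |h(v_U) - h'(v_U)|` over forced components `U` -/
def Delta (F : Finset Vtx) (ef : GArc → ℤ) (h h' : Vtx → ℤ) : ℤ :=
  ∑ᶠ S ∈ {S : Set Vtx | IsForcedComponent F ef S}, compDiff h h' S

/-- a sequence of `n` allowed upward flips at forced components distinct from `U_∞` -/
def UpFlipSeq (F : Finset Vtx) (ef : GArc → ℤ) (w0 : Vtx) (f : ℕ → Vtx → ℤ)
    (n : ℕ) : Prop :=
  ∀ i < n, ∃ S, IsForcedComponent F ef S ∧ S ≠ fcomp F ef w0 ∧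
    InHF F ef w0 (f i) ∧ InHF F ef w0 (f (i + 1)) ∧ f (i + 1) = flipUpAt S (f i)

/-- a sequence of `n` allowed (upward or downward) flips, flipping at step `i`
the forced component `s i` (distinct from `U_∞`) -/
def FlipSeq (F : Finset Vtx) (ef : GArc → ℤ) (w0 : Vtx) (f : ℕ → Vtx → ℤ)
    (s : ℕ → Set Vtx) (n : ℕ) : Prop :=
  ∀ i < n, IsForcedComponent F ef (s i) ∧ s i ≠ fcomp F ef w0 ∧
    InHF F ef w0 (f i) ∧ InHF F ef w0 (f (i + 1)) ∧
    (f (i + 1) = flipUpAt (s i) (f i) ∨ f (i + 1) = flipDownAt (s i) (f i))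

/-- the four arcs of the two horizontal edges through `v` (central axes of the
pair of vertical dominoes covering the 2×2 square centered at `v`) -/
def hPairAxes (v : Vtx) : Set GArc :=
  {((v.1 - 1, v.2), v), (v, (v.1 - 1, v.2)), (v, (v.1 + 1, v.2)), ((v.1 + 1, v.2), v)}

/-- the four arcs of the two vertical edges through `v` (central axes of the
pair of horizontal dominoes covering the 2×2 square centered at `v`) -/
def vPairAxes (v : Vtx) : Set GArc :=
  {((v.1, v.2 - 1), v), (v, (v.1, v.2 - 1)), (v, (v.1, v.2 + 1)), ((v.1, v.2 + 1), v)}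

/-- a local flip: replace the pair of dominoes covering a 2×2 square by the
other pair covering the same square -/
def LocalFlip (D D' : Set GArc) : Prop :=
  ∃ v : Vtx, (hPairAxes v ⊆ D ∧ D' = (D \ hPairAxes v) ∪ vPairAxes v) ∨
             (vPairAxes v ⊆ D ∧ D' = (D \ vPairAxes v) ∪ hPairAxes v)

/-- a sequence of `n` local flips between tilings of `F` -/
def LocalFlipSeq (F : Finset Vtx) (g : ℕ → Set GArc) (n : ℕ) : Prop :=
  ∀ i < n, IsTiling F (g i) ∧ IsTiling F (g (i + 1)) ∧ LocalFlip (g i) (g (i + 1))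

/-- `h` is a maximal element of `(H_F, ≤)` -/
def MaximalInHF (F : Finset Vtx) (ef : GArc → ℤ) (w0 : Vtx) (h : Vtx → ℤ) : Prop :=
  InHF F ef w0 h ∧ ∀ h', InHF F ef w0 h' →
    (∀ v ∈ VF F, h v ≤ h' v) → ∀ v ∈ VF F, h' v = h v

/-- `h` is a minimal element of `(H_F, ≤)` -/
def MinimalInHF (F : Finset Vtx) (ef : GArc → ℤ) (w0 : Vtx) (h : Vtx → ℤ) : Prop :=
  InHF F ef w0 h ∧ ∀ h', InHF F ef w0 h' →
    (∀ v ∈ VF F, h' v ≤ h v) → ∀ v ∈ VF F, h' v = h v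

/-- an elementary cycle of `G_F` enclosing a single cell of `F` -/
def AroundSingleCell (F : Finset Vtx) (C : List Vtx) : Prop :=
  IsElemCycleF F C ∧ ∃ c ∈ F, ∀ c' : Vtx, wind C c' ≠ 0 ↔ c' = c

/-- a cycle of `G_F` following clockwise the boundary of a hole of `F`: it
winds `-1` around each cell of the hole and `0` around every other cell -/
def IsClockwiseHoleContour (F : Finset Vtx) (C : List Vtx) : Prop :=
  IsElemCycleF F C ∧ ∃ c₀, IsHoleCell F c₀ ∧
    (∀ c ∈ comp8 F c₀, wind C c = -1) ∧ (∀ c ∉ comp8 F c₀, wind C c = 0)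

end

open Relation List

lemma exists_nodup_isChain_of_reflTransGen {α : Type*} {r : α → α → Prop} {a b : α}
    (h : ReflTransGen r a b) :
    ∃ l, (a :: l).IsChain r ∧ (a :: l).Nodup ∧ (a :: l).getLast? = some b := by
  induction h using ReflTransGen.head_induction_on with
  | refl => exact ⟨[], .singleton _, nodup_singleton _, rfl⟩
  | @head c d hcd _ ih =>
    obtain ⟨l, hc, hn, hl⟩ := ih
    by_cases hmem : c ∈ d :: l
    · obtain ⟨s, t, hst⟩ := append_of_mem hmem
      rw [hst] at hc hn hl
      exact ⟨t, (isChain_split.mp hc).2, hn.sublist (sublist_append_right _ _),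
        by simpa [getLast?_append] using hl⟩
    · exact ⟨d :: l, hc.cons_cons hcd, nodup_cons.mpr ⟨hmem, hn⟩, by rwa [getLast?_cons_cons]⟩

lemma notMem_dropLast_of_nodup {α : Type*} {L : List α} {x : α} (hn : L.Nodup)
    (hx : L.getLast? = some x) : x ∉ L.dropLast := by
  obtain ⟨l, rfl⟩ := getLast?_eq_some_iff.mp hx
  rw [dropLast_concat]
  exact fun hxl => (nodup_append.mp hn).2.2 x hxl x (mem_singleton_self x) rfl

section Arcs

variable {F : Finset Vtx} {ef : GArc → ℤ}

lemma isArc_cases {x y x' y' : ℤ} (h : IsArc ((x, y), (x', y'))) :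
    (x' = x + 1 ∧ y' = y) ∨ (x' = x - 1 ∧ y' = y) ∨
      (x' = x ∧ y' = y + 1) ∨ (x' = x ∧ y' = y - 1) := by
  simp only [IsArc] at h; omega

lemma isArc_arev {a : GArc} (h : IsArc a) : IsArc (arev a) := by
  simp only [IsArc, arev] at h ⊢; omega

lemma cellA_arev {a : GArc} (h : IsArc a) : cellA (arev a) = cellA a := by
  obtain ⟨⟨x, y⟩, ⟨x', y'⟩⟩ := a
  rcases isArc_cases h with ⟨rfl, rfl⟩ | ⟨rfl, rfl⟩ | ⟨rfl, rfl⟩ | ⟨rfl, rfl⟩ <;>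
    · simp only [cellA, arev, min_def]
      split_ifs <;> simp only [Prod.mk.injEq] <;> omega

lemma cellB_arev {a : GArc} (h : IsArc a) : cellB (arev a) = cellB a := by
  obtain ⟨⟨x, y⟩, ⟨x', y'⟩⟩ := a
  rcases isArc_cases h with ⟨rfl, rfl⟩ | ⟨rfl, rfl⟩ | ⟨rfl, rfl⟩ | ⟨rfl, rfl⟩ <;>
    · simp only [cellB, arev, min_def]
      split_ifs <;> simp only [Prod.mk.injEq] <;> omega

lemma sp_arev {a : GArc} (h : IsArc a) : sp (arev a) = -sp a := by
  obtain ⟨⟨x, y⟩, ⟨x', y'⟩⟩ := a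
  rcases isArc_cases h with ⟨rfl, rfl⟩ | ⟨rfl, rfl⟩ | ⟨rfl, rfl⟩ | ⟨rfl, rfl⟩ <;>
    · simp only [sp, arev, colorSign]
      split_ifs <;> ring_nf <;> omega

lemma arcF_arev {a : GArc} (h : ArcF F a) : ArcF F (arev a) :=
  ⟨isArc_arev h.1, by rw [cellA_arev h.1, cellB_arev h.1]; exact h.2⟩

lemma tArc_arev (hsk : IsSkewOnF F ef) {a : GArc} (h : ArcF F a) :
    tArc F ef (arev a) = -bArc F ef a := by
  simp only [tArc, bArc, cellA_arev h.1, cellB_arev h.1, sp_arev h.1, hsk a h]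
  split_ifs <;> ring

lemma bArc_arev (hsk : IsSkewOnF F ef) {a : GArc} (h : ArcF F a) :
    bArc F ef (arev a) = -tArc F ef a := by
  have := tArc_arev hsk (arcF_arev h)
  rw [show arev (arev a) = a from rfl] at this
  linarith

lemma bArc_eq_tArc_or (a : GArc) :
    bArc F ef a = tArc F ef a ∨ bArc F ef a = tArc F ef a - 4 := by
  simp only [tArc, bArc]; split_ifs <;> omega

end Arcs

section HeightFunctions

variable {F : Finset Vtx} {ef : GArc → ℤ}

/-- `InHF` without the normalization at the base vertex. -/
def IsHeightFn (F : Finset Vtx) (ef : GArc → ℤ) (h : Vtx → ℤ) : Prop :=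
  ∀ a, ArcF F a → h a.2 - h a.1 = bArc F ef a ∨ h a.2 - h a.1 = tArc F ef a

def TightArc (F : Finset Vtx) (ef : GArc → ℤ) (h : Vtx → ℤ) (p q : Vtx) : Prop :=
  ArcF F (p, q) ∧ h q - h p = tArc F ef (p, q)

lemma IsHeightFn.add_const {h : Vtx → ℤ} (hh : IsHeightFn F ef h) (c : ℤ) :
    IsHeightFn F ef (fun x => h x + c) := fun a ha => by
  simpa only [add_sub_add_right_eq_sub] using hh a ha

lemma IsHeightFn.flipDownAt {h : Vtx → ℤ} (hsk : IsSkewOnF F ef) (hh : IsHeightFn F ef h)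
    {R : Set Vtx} (hR : ∀ p q, p ∈ R → TightArc F ef h p q → q ∈ R) :
    IsHeightFn F ef (flipDownAt R h) := by
  rintro ⟨p, q⟩ ha
  have hpq := hh _ ha
  have hqp := hh _ (arcF_arev ha)
  have hgap := bArc_eq_tArc_or (F := F) (ef := ef) (p, q)
  have ht := tArc_arev hsk ha
  have hb := bArc_arev hsk ha
  simp only [arev] at hqp ht hb
  simp only [_root_.flipDownAt, Set.indicator]
  -- an arc between `R` and its complement is not tight from the `R` side, so there `b = t - 4`
  by_cases hp : p ∈ R <;> by_cases hq : q ∈ R <;> simp only [hp, hq, if_true, if_false]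
  · omega
  · have hnt : h q - h p ≠ tArc F ef (p, q) := fun ht' => hq (hR p q hp ⟨ha, ht'⟩)
    omega
  · have hnt : h p - h q ≠ tArc F ef (q, p) := fun ht' => hp (hR q p hq ⟨arcF_arev ha, ht'⟩)
    omega
  · omega

lemma reflTransGen_tightArc_to_base (hsk : IsSkewOnF F ef) {w0 x : Vtx} {h : Vtx → ℤ}
    (hh : InHF F ef w0 h) (hx : ∀ h' : Vtx → ℤ, InHF F ef w0 h' → h x - 4 < h' x) :
    ReflTransGen (TightArc F ef h) x w0 := by
  by_contra hx0
  set R : Set Vtx := {y | ¬ReflTransGen (TightArc F ef h) y w0}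
  have hR : ∀ p q, p ∈ R → TightArc F ef h p q → q ∈ R :=
    fun p q hp hpq hq => hp (.head hpq hq)
  have hw0 : w0 ∉ R := fun hw => hw .refl
  have hlow := hx (flipDownAt R h)
    ⟨by simp [flipDownAt, hw0, hh.1], IsHeightFn.flipDownAt hsk hh.2 hR⟩
  simp [flipDownAt, R, hx0] at hlow

lemma reflTransGen_tightArc_from_base (hsk : IsSkewOnF F ef) {w0 x : Vtx} {h : Vtx → ℤ}
    (hh : InHF F ef w0 h) (hx : ∀ h' : Vtx → ℤ, InHF F ef w0 h' → h' x < h x + 4) :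
    ReflTransGen (TightArc F ef h) w0 x := by
  by_contra hx0
  set R : Set Vtx := {y | ReflTransGen (TightArc F ef h) w0 y}
  have hR : ∀ p q, p ∈ R → TightArc F ef h p q → q ∈ R := fun p q hp hpq => hp.tail hpq
  have hw0 : w0 ∈ R := ReflTransGen.refl
  have hhigh := hx (fun y => flipDownAt R h y + 4)
    ⟨by simp [flipDownAt, hw0, hh.1], (IsHeightFn.flipDownAt hsk hh.2 hR).add_const 4⟩
  simp [flipDownAt, R, hx0] at hhigh

end HeightFunctions

section CriticalCycles

variable {F : Finset Vtx} {ef : GArc → ℤ}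

lemma arcsOf_cons_cons (x y : Vtx) (l : List Vtx) :
    arcsOf (x :: y :: l) = (x, y) :: arcsOf (y :: l) := rfl

lemma isChain_iff_forall_mem_arcsOf {r : Vtx → Vtx → Prop} :
    ∀ {L : List Vtx}, L.IsChain r ↔ ∀ a ∈ arcsOf L, r a.1 a.2
  | [] | [_] => by simp [arcsOf]
  | x :: y :: l => by
    rw [isChain_cons_cons, isChain_iff_forall_mem_arcsOf, arcsOf_cons_cons, forall_mem_cons]

lemma sumOn_tArc_of_isChain {h : Vtx → ℤ} :
    ∀ {x y : Vtx} {l : List Vtx}, (x :: l).IsChain (TightArc F ef h) →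
      (x :: l).getLast? = some y → sumOn (tArc F ef) (x :: l) = h y - h x
  | x, y, [], _, hy => by simp_all [sumOn, arcsOf]
  | x, y, z :: l, hc, hy => by
    rw [isChain_cons_cons] at hc
    rw [getLast?_cons_cons] at hy
    have ih := sumOn_tArc_of_isChain hc.2 hy
    simp only [sumOn, arcsOf_cons_cons, map_cons, sum_cons] at ih ⊢
    rw [ih, ← hc.1.2]
    ring

lemma critRel_of_tightArc {h : Vtx → ℤ} {x y : Vtx} (hxy : TightArc F ef h x y)
    (hyx : ReflTransGen (TightArc F ef h) y x) : critRel F ef x y := by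
  obtain ⟨l, hc, hn, hl⟩ := exists_nodup_isChain_of_reflTransGen hyx
  have hchain : (x :: y :: l).IsChain (TightArc F ef h) := hc.cons_cons hxy
  have hlast : (x :: y :: l).getLast? = some x := by rwa [getLast?_cons_cons]
  refine ⟨x :: y :: l, ⟨⟨⟨by simp, by simp [hlast], fun a ha => ?_⟩, ?_⟩, ?_⟩, by simp, by simp⟩
  · exact (isChain_iff_forall_mem_arcsOf.mp hchain a ha).1
  · rw [dropLast_cons_of_ne_nil (cons_ne_nil y l)]
    exact nodup_cons.mpr ⟨notMem_dropLast_of_nodup hn hl, hn.sublist (dropLast_sublist _)⟩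
  · rw [sumOn_tArc_of_isChain hchain hlast, sub_self]

lemma eqvGen_critRel_of_reflTransGen {h : Vtx → ℤ} {x y : Vtx}
    (hxy : ReflTransGen (TightArc F ef h) x y) (hyx : ReflTransGen (TightArc F ef h) y x) :
    EqvGen (critRel F ef) x y := by
  induction hxy using ReflTransGen.head_induction_on with
  | refl => exact .refl _
  | head hxz hzy ih =>
    exact .trans _ _ _ (.rel _ _ (critRel_of_tightArc hxz (hzy.trans hyx))) (ih (hyx.tail hxz))

lemma fcomp_eq_of_eqvGen {u u' : Vtx} (h : EqvGen (critRel F ef) u u') :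
    fcomp F ef u = fcomp F ef u' := by
  ext x
  exact and_congr_right fun _ => ⟨(EqvGen.symm _ _ h).trans _ _ _, h.trans _ _ _⟩

end CriticalCycles

theorem hmin_ne_hmax_on_forced_components_general (F : Finset Vtx)
    (ef : GArc → ℤ) (hef : IsEquilibrium F ef)
    (w0 : Vtx)
    (hmin hmax : Vtx → ℤ)
    (h1 : InHF F ef w0 hmin)
    (hminle : ∀ h : Vtx → ℤ, InHF F ef w0 h → ∀ v ∈ VF F, hmin v ≤ h v)
    (hmaxge : ∀ h : Vtx → ℤ, InHF F ef w0 h → ∀ v ∈ VF F, h v ≤ hmax v)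
    (S : Set Vtx) (hS : IsForcedComponent F ef S) (hSne : S ≠ fcomp F ef w0)
    (v : Vtx) (hv : v ∈ S) :
    hmin v ≠ hmax v := by
  obtain ⟨v0, -, rfl⟩ := hS
  obtain ⟨hvF, hv0v⟩ := hv
  intro hv_eq
  have hto : ReflTransGen (TightArc F ef hmin) v w0 :=
    reflTransGen_tightArc_to_base hef.1 h1 fun h hh => by linarith [hminle h hh v hvF]
  have hfrom : ReflTransGen (TightArc F ef hmin) w0 v :=
    reflTransGen_tightArc_from_base hef.1 h1 fun h hh => by linarith [hmaxge h hh v hvF]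
  exact hSne (fcomp_eq_of_eqvGen (hv0v.trans _ _ _ (eqvGen_critRel_of_reflTransGen hto hfrom)))

/-- the minimal and maximal height functions differ at every
vertex of every forced component distinct from `U_∞`. -/
theorem hmin_ne_hmax_on_forced_components (F : Finset Vtx) (hF : IsFigure F)
    (ef : GArc → ℤ) (hef : IsEquilibrium F ef)
    (w0 : Vtx) (hw0 : OnOuterBoundary F w0)
    (hmin hmax : Vtx → ℤ)
    (h1 : InHF F ef w0 hmin) (h2 : InHF F ef w0 hmax)
    (hminle : ∀ h : Vtx → ℤ, InHF F ef w0 h → ∀ v ∈ VF F, hmin v ≤ h v)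
    (hmaxge : ∀ h : Vtx → ℤ, InHF F ef w0 h → ∀ v ∈ VF F, h v ≤ hmax v)
    (S : Set Vtx) (hS : IsForcedComponent F ef S) (hSne : S ≠ fcomp F ef w0)
    (v : Vtx) (hv : v ∈ S) :
    hmin v ≠ hmax v :=
  hmin_ne_hmax_on_forced_components_general F ef hef w0 hmin hmax h1 hminle hmaxge S hS hSne v hv
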